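/- Fix integers ℓ ≥ 2, p with 1 ≤ p ≤ ℓ−1, and w ≥ 0. Consider the two systems, for P : ℝ → ℂ²: y(1−y)P″(y) − [[(ℓ+1)(2y−1), −1],[−1, (ℓ+1)(2y−1)]]·P′(y) − Λ_δ·P(y) = 0, where Λ₀ = diag(−(w+1)(w+2ℓ)+2ℓ, −(w+1)(w+2ℓ)+2(2ℓ−p)) (case δ = 0) and Λ₁ = diag(−(w+1)(w+2ℓ)+2p, −(w+1)(w+2ℓ)+2ℓ) (case δ = 1). In each case, the space of ℂ²-valued polynomial solutions is one-dimensional; every nonzero polynomial solution has degree exactly w, and its leading coefficient is a nonzero scalar multiple of (1,0)ᵀ in the case δ = 0 and of (0,1)ᵀ in the case δ = 1. -/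

import Mathlib

namespace Stmt13

/-- The `ℂ²`-valued function determined by a pair of polynomials. -/
def Fq (q : Fin 2 → Polynomial ℂ) : ℝ → Fin 2 → ℂ :=
  fun y j => (q j).eval (y:ℂ)

/-- The first-order coefficient matrix `[[(ℓ+1)(2y-1), -1], [-1, (ℓ+1)(2y-1)]]`. -/
noncomputable def coefM (ℓ : ℕ) (y : ℝ) : Matrix (Fin 2) (Fin 2) ℂ :=
  !![((ℓ:ℂ)+1)*(2*(y:ℂ)-1), -1; -1, ((ℓ:ℂ)+1)*(2*(y:ℂ)-1)]

/-- `Λ₀ = diag(-(w+1)(w+2ℓ)+2ℓ, -(w+1)(w+2ℓ)+2(2ℓ-p))` (case `δ = 0`) and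
`Λ₁ = diag(-(w+1)(w+2ℓ)+2p, -(w+1)(w+2ℓ)+2ℓ)` (case `δ = 1`). -/
noncomputable def LamMat (ℓ p w : ℕ) (δ : Fin 2) : Matrix (Fin 2) (Fin 2) ℂ :=
  if δ = 0 then
    Matrix.diagonal ![-(((w:ℂ)+1)*((w:ℂ)+2*(ℓ:ℂ))) + 2*(ℓ:ℂ),
                      -(((w:ℂ)+1)*((w:ℂ)+2*(ℓ:ℂ))) + 2*(2*(ℓ:ℂ) - (p:ℂ))]
  else
    Matrix.diagonal ![-(((w:ℂ)+1)*((w:ℂ)+2*(ℓ:ℂ))) + 2*(p:ℂ),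
                      -(((w:ℂ)+1)*((w:ℂ)+2*(ℓ:ℂ))) + 2*(ℓ:ℂ)]

/-- The system `y(1-y)P'' - [[(ℓ+1)(2y-1),-1],[-1,(ℓ+1)(2y-1)]]P' - Λ_δ P = 0`. -/
def IsSol (ℓ p w : ℕ) (δ : Fin 2) (q : Fin 2 → Polynomial ℂ) : Prop :=
  ∀ y : ℝ,
    ((y:ℂ) * (1 - (y:ℂ))) • deriv (deriv (Fq q)) y
      - (coefM ℓ y).mulVec (deriv (Fq q) y)
      - (LamMat ℓ p w δ).mulVec (Fq q y) = 0

/-!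
Comparing coefficients of `yⁿ`, the row of the system for a component `f` with diagonal
entry `μ` and coupling term `g'` becomes the recurrence
`(n (n + 2ℓ + 1) + μ) fₙ = (n + 1) ((n + ℓ + 1) fₙ₊₁ + gₙ₊₁)`.
For `μ = -(w + 1)(w + 2ℓ) + 2m` the factor on the left is `(n - w)(n + w + 2ℓ + 1) + 2(m - ℓ)`,
which, as `|m - ℓ| ≤ ℓ`, vanishes only when `n = w` and `m = ℓ`. So on the component `δ` it
vanishes exactly at `n = w`, and on the other one (`m = 2ℓ - p` or `m = p`, with `p < ℓ`)
never. Solving the two recurrences downwards from the top, every polynomial solution vanishes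
above degree `w`, has vanishing `w`-th coefficient off `δ`, and is determined by its `w`-th
coefficient at `δ`; the normalisation `1` at that place does start a solution.
-/

open Polynomial

lemma deriv_Fq (q : Fin 2 → ℂ[X]) : deriv (Fq q) = Fq fun j => derivative (q j) :=
  funext fun y => (hasDerivAt_pi.2 fun j => ((q j).hasDerivAt (y : ℂ)).comp_ofReal).deriv

lemma eq_zero_of_eval_ofReal_eq_zero {P : ℂ[X]} (h : ∀ y : ℝ, P.eval (y : ℂ) = 0) : P = 0 :=
  P.eq_zero_of_infinite_isRoot <| (Set.infinite_range_of_injective Complex.ofReal_injective).mono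
    (by rintro _ ⟨y, rfl⟩; exact h y)

noncomputable def rowOp (ℓ : ℕ) (μ : ℂ) (f g : ℂ[X]) : ℂ[X] :=
  X * (1 - X) * derivative (derivative f) - C ((ℓ : ℂ) + 1) * (2 * X - 1) * derivative f
    + derivative g - C μ * f

lemma isSol_apply {ℓ p w : ℕ} {δ : Fin 2} {d₀ d₁ : ℂ}
    (hΛ : LamMat ℓ p w δ = Matrix.diagonal ![d₀, d₁]) (q : Fin 2 → ℂ[X]) (y : ℝ) :
    ((y:ℂ) * (1 - (y:ℂ))) • deriv (deriv (Fq q)) y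
      - (coefM ℓ y).mulVec (deriv (Fq q) y) - (LamMat ℓ p w δ).mulVec (Fq q y) =
      ![(rowOp ℓ d₀ (q 0) (q 1)).eval (y : ℂ), (rowOp ℓ d₁ (q 1) (q 0)).eval (y : ℂ)] := by
  rw [deriv_Fq, deriv_Fq, hΛ]
  ext j
  fin_cases j <;>
    simp [Fq, coefM, rowOp, dotProduct, Fin.sum_univ_two, Matrix.vecHead, Matrix.vecTail] <;>
    ring

lemma isSol_iff {ℓ p w : ℕ} {δ : Fin 2} {d₀ d₁ : ℂ}
    (hΛ : LamMat ℓ p w δ = Matrix.diagonal ![d₀, d₁]) (q : Fin 2 → ℂ[X]) :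
    IsSol ℓ p w δ q ↔ rowOp ℓ d₀ (q 0) (q 1) = 0 ∧ rowOp ℓ d₁ (q 1) (q 0) = 0 := by
  simp only [IsSol, isSol_apply hΛ, Matrix.cons_eq_zero_iff, Matrix.zero_empty, and_true,
    forall_and]
  exact and_congr ⟨eq_zero_of_eval_ofReal_eq_zero, fun h y => by simp [h]⟩
    ⟨eq_zero_of_eval_ofReal_eq_zero, fun h y => by simp [h]⟩

def indicial (ℓ : ℕ) (μ : ℂ) (n : ℕ) : ℂ := n * (n + 2 * ℓ + 1) + μ

lemma coeff_rowOp (ℓ : ℕ) (μ : ℂ) (f g : ℂ[X]) (n : ℕ) :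
    (rowOp ℓ μ f g).coeff n =
      (n + 1) * ((n + ℓ + 1) * f.coeff (n + 1) + g.coeff (n + 1))
        - indicial ℓ μ n * f.coeff n := by
  have : rowOp ℓ μ f g = X * derivative (derivative f) - X * (X * derivative (derivative f))
      - C (2 * ((ℓ : ℂ) + 1)) * (X * derivative f) + C ((ℓ : ℂ) + 1) * derivative f
      + derivative g - C μ * f := by
    simp only [rowOp, map_mul, map_add, map_ofNat, map_one]
    ring
  rw [this]
  rcases n with _ | _ | n <;>
    simp only [coeff_sub, coeff_add, coeff_C_mul, coeff_X_mul, coeff_X_mul_zero,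
      coeff_derivative, indicial] <;> push_cast <;> ring

lemma rowOp_eq_zero_iff {ℓ : ℕ} {μ : ℂ} {f g : ℂ[X]} :
    rowOp ℓ μ f g = 0 ↔
      ∀ n, indicial ℓ μ n * f.coeff n =
        (n + 1) * ((n + ℓ + 1) * f.coeff (n + 1) + g.coeff (n + 1)) := by
  simp only [Polynomial.ext_iff, coeff_rowOp, coeff_zero]
  exact forall_congr' fun n => by rw [sub_eq_zero, eq_comm]

lemma rowOp_sub_smul (ℓ : ℕ) (μ c : ℂ) (f g f₀ g₀ : ℂ[X]) :
    rowOp ℓ μ (f - c • f₀) (g - c • g₀) = rowOp ℓ μ f g - c • rowOp ℓ μ f₀ g₀ := by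
  ext n
  simp only [coeff_rowOp, coeff_sub, coeff_smul, smul_eq_mul]
  ring

def IsPairSol (ℓ : ℕ) (a b : ℂ) (f g : ℂ[X]) : Prop :=
  rowOp ℓ a f g = 0 ∧ rowOp ℓ b g f = 0

lemma Nat.forall_of_succ_imp {P : ℕ → Prop} (hstep : ∀ n, P (n + 1) → P n) {N : ℕ}
    (hN : ∀ n, N ≤ n → P n) (n : ℕ) : P n :=
  Nat.decreasingInduction (motive := fun k _ => P k) (fun k _ => hstep k)
    (hN _ le_sup_right) (le_max_left n N)

section PairSol

variable {ℓ w : ℕ} {a b : ℂ}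

lemma IsPairSol.eq_zero_of_coeff_eq_zero (ha : ∀ n, indicial ℓ a n = 0 → n = w)
    (hb : ∀ n, indicial ℓ b n ≠ 0) {f g : ℂ[X]} (hfg : IsPairSol ℓ a b f g)
    (hw : f.coeff w = 0) : f = 0 ∧ g = 0 := by
  obtain ⟨hf, hg⟩ := And.imp rowOp_eq_zero_iff.1 rowOp_eq_zero_iff.1 hfg
  have hstep : ∀ n, f.coeff (n + 1) = 0 ∧ g.coeff (n + 1) = 0 →
      f.coeff n = 0 ∧ g.coeff n = 0 := by
    rintro n ⟨hf₁, hg₁⟩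
    have ef := hf n
    have eg := hg n
    rw [hf₁, hg₁, mul_zero, add_zero, mul_zero, mul_eq_zero] at ef
    rw [hf₁, hg₁, mul_zero, add_zero, mul_zero, mul_eq_zero] at eg
    exact ⟨if hn : n = w then hn ▸ hw else ef.resolve_left (mt (ha n) hn),
      eg.resolve_left (hb n)⟩
  have hall := Nat.forall_of_succ_imp (P := fun n => f.coeff n = 0 ∧ g.coeff n = 0) hstep
    (N := f.natDegree + g.natDegree + 1) fun n hn =>
      ⟨coeff_eq_zero_of_natDegree_lt (by omega), coeff_eq_zero_of_natDegree_lt (by omega)⟩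
  exact ⟨ext fun n => (hall n).1, ext fun n => (hall n).2⟩

variable (ℓ w a b)

/-- The coefficients of the solution with `(f.coeff w, g.coeff w) = (1, 0)`, computed
downwards from `n = w` by solving the coefficient recurrence for `(f.coeff n, g.coeff n)`. -/
noncomputable def topCoeff (n : ℕ) : ℂ × ℂ :=
  if w < n then 0
  else if n = w then (1, 0)
  else
    let v := topCoeff (n + 1)
    ((n + 1) * ((n + ℓ + 1) * v.1 + v.2) / indicial ℓ a n,
      (n + 1) * ((n + ℓ + 1) * v.2 + v.1) / indicial ℓ b n)
termination_by w - n

lemma topCoeff_eq_zero_of_lt {n : ℕ} (h : w < n) : topCoeff ℓ w a b n = 0 := by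
  rw [topCoeff, if_pos h]

lemma topCoeff_self : topCoeff ℓ w a b w = (1, 0) := by
  rw [topCoeff, if_neg (lt_irrefl w), if_pos rfl]

lemma topCoeff_of_lt {n : ℕ} (h : n < w) :
    topCoeff ℓ w a b n =
      ((n + 1) * ((n + ℓ + 1) * (topCoeff ℓ w a b (n + 1)).1 + (topCoeff ℓ w a b (n + 1)).2)
          / indicial ℓ a n,
        (n + 1) * ((n + ℓ + 1) * (topCoeff ℓ w a b (n + 1)).2 + (topCoeff ℓ w a b (n + 1)).1)
          / indicial ℓ b n) := by
  rw [topCoeff, if_neg (by omega), if_neg h.ne]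

noncomputable def polyOfCoeffs (u : ℕ → ℂ) : ℂ[X] :=
  ∑ n ∈ Finset.range (w + 1), C (u n) * X ^ n

lemma coeff_polyOfCoeffs (u : ℕ → ℂ) (n : ℕ) :
    (polyOfCoeffs w u).coeff n = if n ≤ w then u n else 0 := by
  simp [polyOfCoeffs, finsetSum_coeff]

lemma natDegree_polyOfCoeffs_le (u : ℕ → ℂ) : (polyOfCoeffs w u).natDegree ≤ w :=
  natDegree_le_iff_coeff_eq_zero.2 fun n hn => by
    rw [coeff_polyOfCoeffs, if_neg (not_le.2 hn)]

noncomputable def topSolFst : ℂ[X] := polyOfCoeffs w fun n => (topCoeff ℓ w a b n).1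

noncomputable def topSolSnd : ℂ[X] := polyOfCoeffs w fun n => (topCoeff ℓ w a b n).2

lemma coeff_topSol (n : ℕ) :
    (topSolFst ℓ w a b).coeff n = (topCoeff ℓ w a b n).1 ∧
      (topSolSnd ℓ w a b).coeff n = (topCoeff ℓ w a b n).2 := by
  simp only [topSolFst, topSolSnd, coeff_polyOfCoeffs]
  split_ifs with h
  · exact ⟨rfl, rfl⟩
  · simp [topCoeff_eq_zero_of_lt ℓ w a b (not_le.1 h)]

variable {ℓ w a b}

lemma isPairSol_topSol (ha : ∀ n, indicial ℓ a n = 0 ↔ n = w) (hb : ∀ n, indicial ℓ b n ≠ 0) :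
    IsPairSol ℓ a b (topSolFst ℓ w a b) (topSolSnd ℓ w a b) := by
  have hzero {n m : ℕ} (h : m < n) : topCoeff ℓ m a b n = 0 := topCoeff_eq_zero_of_lt ℓ m a b h
  refine ⟨rowOp_eq_zero_iff.2 fun n => ?_, rowOp_eq_zero_iff.2 fun n => ?_⟩ <;>
    simp only [(coeff_topSol ℓ w a b _).1, (coeff_topSol ℓ w a b _).2] <;>
    rcases lt_trichotomy n w with h | rfl | h
  · rw [topCoeff_of_lt ℓ w a b h, mul_div_cancel₀ _ (mt (ha n).1 h.ne)]
  · simp [topCoeff_self, hzero n.lt_succ_self, (ha n).2 rfl]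
  · simp [hzero h, hzero (h.trans n.lt_succ_self)]
  · rw [topCoeff_of_lt ℓ w a b h, mul_div_cancel₀ _ (hb n)]
  · simp [topCoeff_self, hzero n.lt_succ_self]
  · simp [hzero h, hzero (h.trans n.lt_succ_self)]

lemma IsPairSol.sub_smul {f g f₀ g₀ : ℂ[X]} (h : IsPairSol ℓ a b f g)
    (h₀ : IsPairSol ℓ a b f₀ g₀) (c : ℂ) : IsPairSol ℓ a b (f - c • f₀) (g - c • g₀) := by
  simp only [IsPairSol, rowOp_sub_smul, h.1, h.2, h₀.1, h₀.2, smul_zero, sub_zero, and_self]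

lemma IsPairSol.eq_smul_topSol (ha : ∀ n, indicial ℓ a n = 0 ↔ n = w)
    (hb : ∀ n, indicial ℓ b n ≠ 0) {f g : ℂ[X]} (hfg : IsPairSol ℓ a b f g) :
    f = f.coeff w • topSolFst ℓ w a b ∧ g = f.coeff w • topSolSnd ℓ w a b := by
  have hw : (f - f.coeff w • topSolFst ℓ w a b).coeff w = 0 := by
    simp [(coeff_topSol ℓ w a b w).1, topCoeff_self]
  have h := (hfg.sub_smul (isPairSol_topSol ha hb) (f.coeff w)).eq_zero_of_coeff_eq_zero
    (fun n => (ha n).1) hb hw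
  exact ⟨sub_eq_zero.1 h.1, sub_eq_zero.1 h.2⟩

end PairSol

lemma fin_two_eq_rev_of_ne {i j : Fin 2} (h : i ≠ j) : i = j.rev := by
  fin_cases i <;> fin_cases j <;> simp_all

theorem solution_space_of_isPairSol_iff {ℓ w : ℕ} {a b : ℂ} {S : (Fin 2 → ℂ[X]) → Prop}
    (δ : Fin 2) (hS : ∀ q, S q ↔ IsPairSol ℓ a b (q δ) (q δ.rev))
    (ha : ∀ n, indicial ℓ a n = 0 ↔ n = w) (hb : ∀ n, indicial ℓ b n ≠ 0) :
    (∃ q₀ : Fin 2 → ℂ[X], S q₀ ∧ q₀ ≠ 0 ∧ ∀ q, S q → ∃ c : ℂ, q = c • q₀) ∧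
      ∀ q, S q → q ≠ 0 →
        (∀ i, (q i).natDegree ≤ w) ∧ (q δ).coeff w ≠ 0 ∧ ∀ i, i ≠ δ → (q i).coeff w = 0 := by
  set q₀ : Fin 2 → ℂ[X] := fun i => if i = δ then topSolFst ℓ w a b else topSolSnd ℓ w a b
  have hrev : δ.rev ≠ δ := by fin_cases δ <;> decide
  have hq₀ : S q₀ := (hS q₀).2 (by simpa [q₀, hrev] using isPairSol_topSol ha hb)
  have hq₀_self : (q₀ δ).coeff w = 1 := by
    simp [q₀, (coeff_topSol ℓ w a b w).1, topCoeff_self]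
  have hq₀_off : ∀ i, i ≠ δ → (q₀ i).coeff w = 0 := fun i hi => by
    simp [q₀, hi, (coeff_topSol ℓ w a b w).2, topCoeff_self]
  have hq₀_deg : ∀ i, (q₀ i).natDegree ≤ w := fun i => by
    unfold q₀; split_ifs <;> exact natDegree_polyOfCoeffs_le w _
  have hspan : ∀ q, S q → q = (q δ).coeff w • q₀ := fun q hq => by
    obtain ⟨hfst, hsnd⟩ := ((hS q).1 hq).eq_smul_topSol ha hb
    funext i
    rcases eq_or_ne i δ with rfl | hi
    · simpa [q₀] using hfst
    · simpa [q₀, hi, ← fin_two_eq_rev_of_ne hi] using hsnd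
  refine ⟨⟨q₀, hq₀, fun h => by simp [h] at hq₀_self, fun q hq => ⟨_, hspan q hq⟩⟩, ?_⟩
  intro q hq hne
  obtain ⟨c, rfl⟩ : ∃ c : ℂ, q = c • q₀ := ⟨_, hspan q hq⟩
  have hc : c ≠ 0 := by rintro rfl; simp at hne
  refine ⟨fun i => (natDegree_smul_le _ _).trans (hq₀_deg i), by simpa [hq₀_self] using hc,
    fun i hi => by simp [hq₀_off i hi]⟩

lemma int_sub_mul_add_eq_zero_iff (n w ℓ : ℕ) {k : ℤ} (hk : |k| ≤ ℓ) :
    ((n : ℤ) - w) * (n + w + 2 * ℓ + 1) + 2 * k = 0 ↔ n = w ∧ k = 0 := by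
  rw [abs_le] at hk
  refine ⟨fun h => ?_, by rintro ⟨rfl, rfl⟩; simp⟩
  rcases lt_trichotomy n w with hlt | rfl | hgt
  · have : (n : ℤ) + 1 ≤ w := by exact_mod_cast hlt
    nlinarith
  · simpa using h
  · have : (w : ℤ) + 1 ≤ n := by exact_mod_cast hgt
    nlinarith

noncomputable def lamEntry (ℓ w : ℕ) (m : ℂ) : ℂ := -(((w : ℂ) + 1) * (w + 2 * ℓ)) + 2 * m

lemma LamMat_zero (ℓ p w : ℕ) :
    LamMat ℓ p w 0 = Matrix.diagonal ![lamEntry ℓ w ℓ, lamEntry ℓ w (2 * ℓ - p)] := rfl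

lemma LamMat_one (ℓ p w : ℕ) :
    LamMat ℓ p w 1 = Matrix.diagonal ![lamEntry ℓ w p, lamEntry ℓ w ℓ] := rfl

lemma indicial_lamEntry_eq_zero_iff {ℓ w : ℕ} {m : ℂ} {k : ℤ} (hm : m = ℓ + k) (hk : |k| ≤ ℓ)
    (n : ℕ) : indicial ℓ (lamEntry ℓ w m) n = 0 ↔ n = w ∧ k = 0 := by
  have : indicial ℓ (lamEntry ℓ w m) n = (((n : ℤ) - w) * (n + w + 2 * ℓ + 1) + 2 * k : ℤ) := by
    rw [indicial, lamEntry, hm]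
    push_cast
    ring
  rw [this, Int.cast_eq_zero, int_sub_mul_add_eq_zero_iff n w ℓ hk]

theorem polynomial_solution_space_general (ℓ p w : ℕ) (hℓ : 2 ≤ ℓ) (hp2 : p ≤ ℓ - 1) :
    ∀ δ : Fin 2,
      (∃ q₀ : Fin 2 → Polynomial ℂ, IsSol ℓ p w δ q₀ ∧ q₀ ≠ 0 ∧
        ∀ q : Fin 2 → Polynomial ℂ, IsSol ℓ p w δ q → ∃ c : ℂ, q = c • q₀) ∧
      ∀ q : Fin 2 → Polynomial ℂ, IsSol ℓ p w δ q → q ≠ 0 →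
        (∀ i, (q i).natDegree ≤ w) ∧ (q δ).coeff w ≠ 0 ∧
        ∀ i, i ≠ δ → (q i).coeff w = 0 := by
  have hcrit : ∀ n, indicial ℓ (lamEntry ℓ w ℓ) n = 0 ↔ n = w := fun n => by
    simpa using indicial_lamEntry_eq_zero_iff (w := w) (k := 0) (by simp) (by simp) n
  have hnoncrit : ∀ {m : ℂ} (k : ℤ), m = ℓ + k → |k| ≤ ℓ → k ≠ 0 →
      ∀ n, indicial ℓ (lamEntry ℓ w m) n ≠ 0 :=
    fun k hm hk hk0 n h => hk0 ((indicial_lamEntry_eq_zero_iff hm hk n).1 h).2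
  intro δ
  fin_cases δ
  · exact solution_space_of_isPairSol_iff 0 (isSol_iff (LamMat_zero ℓ p w)) hcrit
      (hnoncrit (ℓ - p) (by push_cast; ring) (by rw [abs_le]; omega) (by omega))
  · exact solution_space_of_isPairSol_iff 1
      (fun q => (isSol_iff (LamMat_one ℓ p w) q).trans and_comm) hcrit
      (hnoncrit (p - ℓ) (by push_cast; ring) (by rw [abs_le]; omega) (by omega))

/-- For each `δ`, the space of `ℂ²`-valued polynomial solutions is one-dimensional;
every nonzero polynomial solution has degree exactly `w` and leading coefficient a
nonzero multiple of the `δ`-th standard basis vector. -/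
theorem polynomial_solution_space (ℓ p w : ℕ) (hℓ : 2 ≤ ℓ) (hp1 : 1 ≤ p) (hp2 : p ≤ ℓ - 1) :
    ∀ δ : Fin 2,
      (∃ q₀ : Fin 2 → Polynomial ℂ, IsSol ℓ p w δ q₀ ∧ q₀ ≠ 0 ∧
        ∀ q : Fin 2 → Polynomial ℂ, IsSol ℓ p w δ q → ∃ c : ℂ, q = c • q₀) ∧
      ∀ q : Fin 2 → Polynomial ℂ, IsSol ℓ p w δ q → q ≠ 0 →
        (∀ i, (q i).natDegree ≤ w) ∧ (q δ).coeff w ≠ 0 ∧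
        ∀ i, i ≠ δ → (q i).coeff w = 0 :=
  polynomial_solution_space_general ℓ p w hℓ hp2

end Stmt13
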